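/- arXiv:1401.6274 — 3 statements merged into one kernel-verified Lean document; each statement's English description precedes it below -/
import Mathlib

section
/- For t < 0, the solution r(t) of the ODE r'(t) = sin(r(t)) with r(0) = 1 satisfies e^t < r(t) < e^{t/2}. -/
/-!
By uniqueness of solutions of the Lipschitz ODE `r' = sin r`, the solution through `r 0 = 1`
never reaches the equilibria `0` and `π`, so `0 < r < π` and `r` is strictly increasing;
hence `0 < r t < 1` for `t < 0`. There `r / 2 < sin r < r`, and comparing with the linear
equations `y' = y` and `y' = y / 2` (through the monotonicity of `r t * exp (-(k * t))`) gives
the two bounds.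
-/

open Set Real

open scoped NNReal

theorem eq_const_of_hasDerivAt_of_apply_eq_zero {E : Type*} [NormedAddCommGroup E]
    [NormedSpace ℝ E] {v : E → E} {K : ℝ≥0} (hv : LipschitzWith K v) {f : ℝ → E}
    (hf : ∀ t, HasDerivAt f (v (f t)) t) {c : E} (hc : v c = 0) {t₀ : ℝ} (ht₀ : f t₀ = c) :
    f = fun _ => c :=
  ODE_solution_unique_univ (v := fun _ => v) (s := fun _ => univ)
    (fun _ => hv.lipschitzOnWith) (fun t => ⟨hf t, trivial⟩)
    (fun t => ⟨by simpa [hc] using hasDerivAt_const t c, trivial⟩) ht₀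

theorem mem_Ioo_of_continuous_of_forall_ne {f : ℝ → ℝ} (hf : Continuous f) {a b t₀ : ℝ}
    (h₀ : f t₀ ∈ Ioo a b) (ha : ∀ t, f t ≠ a) (hb : ∀ t, f t ≠ b) (t : ℝ) : f t ∈ Ioo a b := by
  have hIcc : ∀ {s s'}, Icc (f s) (f s') ⊆ range f := fun {s s'} =>
    (isPreconnected_range hf).Icc_subset (mem_range_self s) (mem_range_self s')
  by_contra hout
  rcases not_and_or.1 hout with hle | hge
  · obtain ⟨s, hs⟩ := hIcc ⟨not_lt.1 hle, h₀.1.le⟩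
    exact ha s hs
  · obtain ⟨s, hs⟩ := hIcc ⟨h₀.2.le, not_lt.1 hge⟩
    exact hb s hs

theorem hasDerivAt_mul_exp_neg_mul {r : ℝ → ℝ} {r' : ℝ} (k : ℝ) {t : ℝ} (hr : HasDerivAt r r' t) :
    HasDerivAt (fun s => r s * exp (-(k * s))) ((r' - k * r t) * exp (-(k * t))) t := by
  have hexp := ((hasDerivAt_id' t).const_mul k).neg.exp
  exact (hr.mul hexp).congr_deriv (by simp only [Pi.neg_apply]; ring)

section Comparison

variable {r r' : ℝ → ℝ} {k a : ℝ}

theorem continuousOn_mul_exp_neg_mul (hr : ∀ t ≤ a, HasDerivAt r (r' t) t) :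
    ContinuousOn (fun s => r s * exp (-(k * s))) (Iic a) := fun t ht =>
  (hasDerivAt_mul_exp_neg_mul k (hr t ht)).continuousAt.continuousWithinAt

theorem mul_exp_lt_of_deriv_lt (hr : ∀ t ≤ a, HasDerivAt r (r' t) t)
    (hlt : ∀ t < a, r' t < k * r t) {t : ℝ} (ht : t < a) : r a * exp (k * (t - a)) < r t := by
  have hanti : StrictAntiOn (fun s => r s * exp (-(k * s))) (Iic a) := by
    refine strictAntiOn_of_deriv_neg (convex_Iic a) (continuousOn_mul_exp_neg_mul hr)
      fun s hs => ?_
    rw [interior_Iic] at hs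
    rw [(hasDerivAt_mul_exp_neg_mul k (hr s hs.le)).deriv]
    exact mul_neg_of_neg_of_pos (sub_neg.2 (hlt s hs)) (exp_pos _)
  have hlt_at := hanti (mem_Iic.2 ht.le) (mem_Iic.2 le_rfl) ht
  calc r a * exp (k * (t - a)) = r a * exp (-(k * a)) * exp (k * t) := by
        rw [mul_assoc, ← exp_add]; ring_nf
    _ < r t * exp (-(k * t)) * exp (k * t) := mul_lt_mul_of_pos_right hlt_at (exp_pos _)
    _ = r t := by rw [mul_assoc, ← exp_add]; simp

theorem lt_mul_exp_of_lt_deriv (hr : ∀ t ≤ a, HasDerivAt r (r' t) t)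
    (hgt : ∀ t < a, k * r t < r' t) {t : ℝ} (ht : t < a) : r t < r a * exp (k * (t - a)) := by
  have hneg : ∀ t ≤ a, HasDerivAt (fun s => -r s) (-r' t) t := fun t ht => (hr t ht).neg
  have := mul_exp_lt_of_deriv_lt (k := k) hneg (fun s hs => by linarith [hgt s hs]) ht
  linarith

end Comparison

theorem half_mul_lt_sin {x : ℝ} (hx₀ : 0 < x) (hx₁ : x < 1) : x / 2 < sin x := by
  have hx : x < π / 2 := by linarith [pi_gt_three]
  have hcoeff : 1 / 2 < 2 / π := by rw [div_lt_div_iff₀ two_pos pi_pos]; linarith [pi_lt_four]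
  calc x / 2 = 1 / 2 * x := by ring
    _ < 2 / π * x := by gcongr
    _ < sin x := mul_lt_sin hx₀ hx

/-- For `t < 0`, the solution `r(t)` of `r' = sin r`, `r(0) = 1`,
satisfies `e^t < r(t) < e^{t/2}`. -/
theorem stmt1 (r : ℝ → ℝ) (h0 : r 0 = 1)
    (hode : ∀ t : ℝ, HasDerivAt r (Real.sin (r t)) t) :
    ∀ t < (0:ℝ), Real.exp t < r t ∧ r t < Real.exp (t / 2) := by
  have hcont : Continuous r := continuous_iff_continuousAt.2 fun t => (hode t).continuousAt
  have avoids {c : ℝ} (hc : sin c = 0) (hc1 : c ≠ 1) (t : ℝ) : r t ≠ c := fun ht => hc1 <| by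
    have hconst := eq_const_of_hasDerivAt_of_apply_eq_zero lipschitzWith_sin hode hc ht
    simpa [h0, eq_comm] using congrFun hconst 0
  have hbounds : ∀ t, r t ∈ Ioo 0 π :=
    mem_Ioo_of_continuous_of_forall_ne hcont (t₀ := 0)
      (h0 ▸ ⟨one_pos, by linarith [pi_gt_three]⟩)
      (avoids sin_zero zero_ne_one) (avoids sin_pi (by linarith [pi_gt_three]))
  have hmono : StrictMono r := strictMono_of_deriv_pos fun t => by
    rw [(hode t).deriv]
    exact sin_pos_of_pos_of_lt_pi (hbounds t).1 (hbounds t).2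
  have hunit : ∀ t < (0:ℝ), 0 < r t ∧ r t < 1 := fun t ht => ⟨(hbounds t).1, h0 ▸ hmono ht⟩
  intro t ht
  constructor
  · simpa [h0] using mul_exp_lt_of_deriv_lt (k := 1) (fun s _ => hode s)
      (fun s hs => by simpa using sin_lt (hunit s hs).1) ht
  · have := lt_mul_exp_of_lt_deriv (k := 1 / 2) (fun s _ => hode s)
      (fun s hs => by linarith [half_mul_lt_sin (hunit s hs).1 (hunit s hs).2]) ht
    rwa [h0, one_mul, sub_zero, one_div_mul_eq_div] at this
end

section
/- Let L > 0 and let F : {l₀, l₀+1, …, l₁} → [0,∞) satisfy the three-circle alternative: for every l₀ < l < l₁, either F(l) ≤ e^{−L} F(l−1) or F(l) ≤ e^{−L} F(l+1), and moreover if F(l+1) ≤ e^{−L}F(l) then F(l) ≤ e^{−L}F(l−1), and if F(l−1) ≤ e^{−L}F(l) then F(l) ≤ e^{−L}F(l+1). Then for all l₀ < l < l₁, F(l) ≤ C(e^{−L(l−l₀)} F(l₀) + e^{−L(l₁−l)} F(l₁)) with C depending only on L. -/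
/-- Discrete three-circle lemma: if `F : ℤ → [0,∞)` satisfies, for every `l₀ < l < l₁`,
the three alternatives `(F(l+1) ≤ e^{-L}F(l) → F(l) ≤ e^{-L}F(l-1))`,
`(F(l-1) ≤ e^{-L}F(l) → F(l) ≤ e^{-L}F(l+1))`, and
`F(l) ≤ e^{-L}F(l-1) ∨ F(l) ≤ e^{-L}F(l+1)`, then
`F(l) ≤ C(e^{-L(l-l₀)}F(l₀) + e^{-L(l₁-l)}F(l₁))` with `C = C(L)`. -/
theorem stmt8 (L : ℝ) (hL : 0 < L) :
    ∃ C : ℝ, 0 < C ∧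
      ∀ (F : ℤ → ℝ) (l₀ l₁ : ℤ), (∀ l, 0 ≤ F l) →
      (∀ l, l₀ < l → l < l₁ →
        ((F (l+1) ≤ Real.exp (-L) * F l → F l ≤ Real.exp (-L) * F (l-1)) ∧
         (F (l-1) ≤ Real.exp (-L) * F l → F l ≤ Real.exp (-L) * F (l+1)) ∧
         (F l ≤ Real.exp (-L) * F (l-1) ∨ F l ≤ Real.exp (-L) * F (l+1)))) →
      ∀ l, l₀ < l → l < l₁ →
        F l ≤ C * (Real.exp (-L * ((l : ℝ) - (l₀ : ℝ))) * F l₀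
                 + Real.exp (-L * ((l₁ : ℝ) - (l : ℝ))) * F l₁) := by
  refine ⟨1, one_pos, ?_⟩
  intro F l₀ l₁ hF hyp l hl₀ hl₁
  have E := Real.exp_pos (-L)
  -- leftward propagation
  have keyA : ∀ n : ℕ, ∀ l, l₀ < l → l < l₁ → l - l₀ = (n : ℤ) + 1 →
      F l ≤ Real.exp (-L) * F (l - 1) →
      F l ≤ Real.exp (-L * ((n : ℝ) + 1)) * F l₀ := by
    intro n
    induction n with
    | zero =>
      intro l h0 h1 hn hd
      have hl : l - 1 = l₀ := by omega
      rw [hl] at hd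
      simpa using hd
    | succ k ih =>
      intro l h0 h1 hn hd
      have h0' : l₀ < l - 1 := by omega
      have h1' : l - 1 < l₁ := by omega
      have hd' : F (l - 1) ≤ Real.exp (-L) * F (l - 1 - 1) :=
        (hyp (l - 1) h0' h1').1 (by simpa using hd)
      have hF1 := ih (l - 1) h0' h1' (by omega) hd'
      calc F l ≤ Real.exp (-L) * F (l - 1) := hd
        _ ≤ Real.exp (-L) * (Real.exp (-L * ((k : ℝ) + 1)) * F l₀) :=
            mul_le_mul_of_nonneg_left hF1 E.le
        _ = Real.exp (-L * (((k : ℕ) + 1 : ℕ) + 1 : ℝ)) * F l₀ := by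
            rw [← mul_assoc, ← Real.exp_add]
            congr 1
            push_cast
            ring
  -- rightward propagation
  have keyB : ∀ n : ℕ, ∀ l, l₀ < l → l < l₁ → l₁ - l = (n : ℤ) + 1 →
      F l ≤ Real.exp (-L) * F (l + 1) →
      F l ≤ Real.exp (-L * ((n : ℝ) + 1)) * F l₁ := by
    intro n
    induction n with
    | zero =>
      intro l h0 h1 hn hd
      have hl : l + 1 = l₁ := by omega
      rw [hl] at hd
      simpa using hd
    | succ k ih =>
      intro l h0 h1 hn hd
      have h0' : l₀ < l + 1 := by omega
      have h1' : l + 1 < l₁ := by omega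
      have hd' : F (l + 1) ≤ Real.exp (-L) * F (l + 1 + 1) :=
        (hyp (l + 1) h0' h1').2.1 (by simpa using hd)
      have hF1 := ih (l + 1) h0' h1' (by omega) hd'
      calc F l ≤ Real.exp (-L) * F (l + 1) := hd
        _ ≤ Real.exp (-L) * (Real.exp (-L * ((k : ℝ) + 1)) * F l₁) :=
            mul_le_mul_of_nonneg_left hF1 E.le
        _ = Real.exp (-L * (((k : ℕ) + 1 : ℕ) + 1 : ℝ)) * F l₁ := by
            rw [← mul_assoc, ← Real.exp_add]
            congr 1
            push_cast
            ring
  have t1 : 0 ≤ Real.exp (-L * ((l : ℝ) - (l₀ : ℝ))) * F l₀ :=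
    mul_nonneg (Real.exp_pos _).le (hF _)
  have t2 : 0 ≤ Real.exp (-L * ((l₁ : ℝ) - (l : ℝ))) * F l₁ :=
    mul_nonneg (Real.exp_pos _).le (hF _)
  rw [one_mul]
  rcases (hyp l hl₀ hl₁).2.2 with hd | hd
  · set n : ℕ := (l - l₀ - 1).toNat with hn
    have hnz : l - l₀ = (n : ℤ) + 1 := by omega
    have h := keyA n l hl₀ hl₁ hnz hd
    have hcast : ((n : ℝ) + 1) = (l : ℝ) - (l₀ : ℝ) := by
      have : ((l : ℝ) - (l₀ : ℝ)) = ((l - l₀ : ℤ) : ℝ) := by push_cast; ring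
      rw [this, hnz]; push_cast; ring
    rw [hcast] at h
    linarith
  · set n : ℕ := (l₁ - l - 1).toNat with hn
    have hnz : l₁ - l = (n : ℤ) + 1 := by omega
    have h := keyB n l hl₀ hl₁ hnz hd
    have hcast : ((n : ℝ) + 1) = (l₁ : ℝ) - (l : ℝ) := by
      have : ((l₁ : ℝ) - (l : ℝ)) = ((l₁ - l : ℤ) : ℝ) := by push_cast; ring
      rw [this, hnz]; push_cast; ring
    rw [hcast] at h
    linarith
end

section
/- With notation as above (f = sin r, ∂_t = f∂_r, w = ∂_t²u + 2f'∂_t u + Δ_{S³}u so that Δ_g u = f^{−2}w), the bi-Laplacian of u on the round S⁴ satisfies Δ_g² u = f^{−4}((∂_t² + Δ_{S³})² u − 4 ∂_t² u) + 2 f^{−2} w. -/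
open scoped ContDiff

set_option maxHeartbeats 2000000


/-- The bi-Laplacian of the round `S⁴` in the conformal coordinate `t` (with `f = sin r`,
`∂_t = f∂_r`, `w = ∂_t²u + 2f'∂_t u + Δ_{S³}u`, `Δ_g u = f^{-2}w`):
`Δ_g²u = f^{-4}((∂_t² + Δ_{S³})²u - 4∂_t²u) + 2f^{-2}w`.
The angular Laplacian `Δ_{S³}` is modelled as a continuous linear operator `A` on a normed
space `V` of functions of the angular variable, commuting with all radial operations. -/
theorem stmt11 {V : Type*} [NormedAddCommGroup V] [NormedSpace ℝ V]
    (A : V →L[ℝ] V) (u : ℝ → V) (hu : ContDiff ℝ (⊤ : ℕ∞) u) (r : ℝ)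
    (hr : Real.sin r ≠ 0) :
    let Dt : (ℝ → V) → ℝ → V := fun w s => Real.sin s • deriv w s
    let Lap : (ℝ → V) → ℝ → V := fun w s =>
      deriv (deriv w) s + (3 * Real.cos s / Real.sin s) • deriv w s
        + ((Real.sin s) ^ 2)⁻¹ • A (w s)
    Lap (Lap u) r
      = ((Real.sin r) ^ 4)⁻¹ •
          (Dt (Dt (Dt (Dt u))) r + (2:ℝ) • A (Dt (Dt u) r) + A (A (u r))
            - (4:ℝ) • Dt (Dt u) r)
        + (2 * ((Real.sin r) ^ 2)⁻¹) •
            (Dt (Dt u) r + (2 * Real.cos r) • Dt u r + A (u r)) := by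
  intro Dt Lap
  -- smoothness bookkeeping
  have h0 : ContDiff ℝ ∞ u := hu.of_le (by simp)
  have h1 : ContDiff ℝ ∞ (deriv u) := (contDiff_infty_iff_deriv.mp h0).2
  have h2 : ContDiff ℝ ∞ (deriv (deriv u)) := (contDiff_infty_iff_deriv.mp h1).2
  have h3 : ContDiff ℝ ∞ (deriv (deriv (deriv u))) := (contDiff_infty_iff_deriv.mp h2).2
  have hd0 : Differentiable ℝ u := (contDiff_infty_iff_deriv.mp h0).1
  have hd1 : Differentiable ℝ (deriv u) := (contDiff_infty_iff_deriv.mp h1).1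
  have hd2 : Differentiable ℝ (deriv (deriv u)) := (contDiff_infty_iff_deriv.mp h2).1
  have hd3 : Differentiable ℝ (deriv (deriv (deriv u))) := (contDiff_infty_iff_deriv.mp h3).1
  have hD0 : ∀ t, HasDerivAt u (deriv u t) t := fun t => (hd0 t).hasDerivAt
  have hD1 : ∀ t, HasDerivAt (deriv u) (deriv (deriv u) t) t := fun t => (hd1 t).hasDerivAt
  have hD2 : ∀ t, HasDerivAt (deriv (deriv u)) (deriv (deriv (deriv u)) t) t :=
    fun t => (hd2 t).hasDerivAt
  have hD3 : ∀ t, HasDerivAt (deriv (deriv (deriv u))) (deriv (deriv (deriv (deriv u))) t) t :=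
    fun t => (hd3 t).hasDerivAt
  have hAu : ∀ (w : ℝ → V), Differentiable ℝ w → ∀ s : ℝ,
      HasDerivAt (fun t => A (w t)) (A (deriv w s)) s :=
    fun w hw s => A.hasFDerivAt.comp_hasDerivAt s (hw s).hasDerivAt
  -- coefficient derivatives
  have hsin := Real.hasDerivAt_sin
  have hcos := Real.hasDerivAt_cos
  have hc3 : ∀ s : ℝ, Real.sin s ≠ 0 →
      HasDerivAt (fun y => 3 * Real.cos y / Real.sin y) (-3 / Real.sin s ^ 2) s := by
    intro s hs
    have h := ((hcos s).const_mul 3).div (hsin s) hs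
    refine h.congr_deriv ?_
    field_simp
    linear_combination (-1 : ℝ) * Real.sin_sq_add_cos_sq s
  have hc2 : ∀ s : ℝ, Real.sin s ≠ 0 →
      HasDerivAt (fun y => (Real.sin y ^ 2)⁻¹) (-2 * Real.cos s / Real.sin s ^ 3) s := by
    intro s hs
    have h := ((hsin s).pow 2).inv (pow_ne_zero 2 hs)
    refine h.congr_deriv ?_
    simp only [Pi.pow_apply]
    field_simp
    ring
  have hc1 : ∀ s : ℝ, Real.sin s ≠ 0 →
      HasDerivAt (fun y => -3 / Real.sin y ^ 2) (6 * Real.cos s / Real.sin s ^ 3) s := by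
    intro s hs
    have h := (hasDerivAt_const s (-3 : ℝ)).div ((hsin s).pow 2) (pow_ne_zero 2 hs)
    refine h.congr_deriv ?_
    simp only [Pi.pow_apply]
    field_simp
    ring
  have hc0 : ∀ s : ℝ, Real.sin s ≠ 0 →
      HasDerivAt (fun y => -2 * Real.cos y / Real.sin y ^ 3)
        (6 / Real.sin s ^ 4 - 4 / Real.sin s ^ 2) s := by
    intro s hs
    have h := ((hcos s).const_mul (-2)).div ((hsin s).pow 3) (pow_ne_zero 3 hs)
    refine h.congr_deriv ?_
    simp only [Pi.pow_apply]
    field_simp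
    linear_combination (6 * Real.sin s ^ 2 : ℝ) * Real.sin_sq_add_cos_sq s
  -- first derivative of Lap u
  have hF1 : ∀ s : ℝ, Real.sin s ≠ 0 →
      HasDerivAt
        (fun y => deriv (deriv u) y + (3 * Real.cos y / Real.sin y) • deriv u y
          + (Real.sin y ^ 2)⁻¹ • A (u y))
        (deriv (deriv (deriv u)) s
          + ((3 * Real.cos s / Real.sin s) • deriv (deriv u) s + (-3 / Real.sin s ^ 2) • deriv u s)
          + ((Real.sin s ^ 2)⁻¹ • A (deriv u s) + (-2 * Real.cos s / Real.sin s ^ 3) • A (u s)))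
        s := by
    intro s hs
    exact ((hD2 s).add ((hc3 s hs).smul (hD1 s))).add
      ((hc2 s hs).smul (hAu u hd0 s))
    -- second derivative of Lap u
  have hF2 : HasDerivAt
      (fun s => deriv (deriv (deriv u)) s
        + ((3 * Real.cos s / Real.sin s) • deriv (deriv u) s + (-3 / Real.sin s ^ 2) • deriv u s)
        + ((Real.sin s ^ 2)⁻¹ • A (deriv u s) + (-2 * Real.cos s / Real.sin s ^ 3) • A (u s)))
      (deriv (deriv (deriv (deriv u))) r
        + (((3 * Real.cos r / Real.sin r) • deriv (deriv (deriv u)) r + (-3 / Real.sin r ^ 2) • deriv (deriv u) r)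
          + ((-3 / Real.sin r ^ 2) • deriv (deriv u) r + (6 * Real.cos r / Real.sin r ^ 3) • deriv u r))
        + (((Real.sin r ^ 2)⁻¹ • A (deriv (deriv u) r) + (-2 * Real.cos r / Real.sin r ^ 3) • A (deriv u r))
          + ((-2 * Real.cos r / Real.sin r ^ 3) • A (deriv u r) + (6 / Real.sin r ^ 4 - 4 / Real.sin r ^ 2) • A (u r))))
      r :=
    ((hD3 r).add (((hc3 r hr).smul (hD2 r)).add ((hc1 r hr).smul (hD1 r)))).add
      (((hc2 r hr).smul (hAu (deriv u) hd1 r)).add ((hc0 r hr).smul (hAu u hd0 r)))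
  have hne : ∀ᶠ s in nhds r, Real.sin s ≠ 0 :=
    Real.continuous_sin.continuousAt.eventually_ne hr
  have heq : deriv (fun y => deriv (deriv u) y + (3 * Real.cos y / Real.sin y) • deriv u y
      + (Real.sin y ^ 2)⁻¹ • A (u y)) =ᶠ[nhds r]
      (fun s => deriv (deriv (deriv u)) s
        + ((3 * Real.cos s / Real.sin s) • deriv (deriv u) s + (-3 / Real.sin s ^ 2) • deriv u s)
        + ((Real.sin s ^ 2)⁻¹ • A (deriv u s) + (-2 * Real.cos s / Real.sin s ^ 3) • A (u s))) :=
    hne.mono fun s hs => (hF1 s hs).deriv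
  -- the Dt side
  have hP2 : ∀ t : ℝ, HasDerivAt (fun y => Real.sin y • deriv u y) (Real.sin t • deriv (deriv u) t + Real.cos t • deriv u t) t :=
    fun t => (hsin t).smul (hD1 t)
  have hE2 : (fun s => Real.sin s • deriv (fun y => Real.sin y • deriv u y) s)
      = fun t => Real.sin t • (Real.sin t • deriv (deriv u) t + Real.cos t • deriv u t) :=
    funext fun t => by rw [(hP2 t).deriv]
  have hP2' : ∀ t : ℝ, HasDerivAt (fun y => Real.sin y • deriv (deriv u) y + Real.cos y • deriv u y)
      ((Real.sin t • deriv (deriv (deriv u)) t + Real.cos t • deriv (deriv u) t) + (Real.cos t • deriv (deriv u) t + (-Real.sin t) • deriv u t)) t :=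
    fun t => ((hsin t).smul (hD2 t)).add ((hcos t).smul (hD1 t))
  have hG2' : ∀ t : ℝ, HasDerivAt (fun y => Real.sin y • (Real.sin y • deriv (deriv u) y + Real.cos y • deriv u y))
      (Real.sin t • ((Real.sin t • deriv (deriv (deriv u)) t + Real.cos t • deriv (deriv u) t) + (Real.cos t • deriv (deriv u) t + (-Real.sin t) • deriv u t)) + Real.cos t • (Real.sin t • deriv (deriv u) t + Real.cos t • deriv u t)) t :=
    fun t => (hsin t).smul (hP2' t)
  have hE3 : (fun s => Real.sin s • deriv (fun t => Real.sin t • (Real.sin t • deriv (deriv u) t + Real.cos t • deriv u t)) s)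
      = fun t => Real.sin t • (Real.sin t • ((Real.sin t • deriv (deriv (deriv u)) t + Real.cos t • deriv (deriv u) t) + (Real.cos t • deriv (deriv u) t + (-Real.sin t) • deriv u t)) + Real.cos t • (Real.sin t • deriv (deriv u) t + Real.cos t • deriv u t)) :=
    funext fun t => by rw [(hG2' t).deriv]
  have hR : ∀ t : ℝ, HasDerivAt (fun y => (Real.sin y • deriv (deriv (deriv u)) y + Real.cos y • deriv (deriv u) y) + (Real.cos y • deriv (deriv u) y + (-Real.sin y) • deriv u y))
      (((Real.sin t • deriv (deriv (deriv (deriv u))) t + Real.cos t • deriv (deriv (deriv u)) t) + (Real.cos t • deriv (deriv (deriv u)) t + (-Real.sin t) • deriv (deriv u) t)) + ((Real.cos t • deriv (deriv (deriv u)) t + (-Real.sin t) • deriv (deriv u) t) + ((-Real.sin t) • deriv (deriv u) t + (-Real.cos t) • deriv u t))) t :=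
    fun t => (((hsin t).smul (hD3 t)).add ((hcos t).smul (hD2 t))).add
      (((hcos t).smul (hD2 t)).add (((hsin t).neg).smul (hD1 t)))
  have hP3' : ∀ t : ℝ, HasDerivAt (fun y => Real.sin y • ((Real.sin y • deriv (deriv (deriv u)) y + Real.cos y • deriv (deriv u) y) + (Real.cos y • deriv (deriv u) y + (-Real.sin y) • deriv u y)) + Real.cos y • (Real.sin y • deriv (deriv u) y + Real.cos y • deriv u y))
      ((Real.sin t • (((Real.sin t • deriv (deriv (deriv (deriv u))) t + Real.cos t • deriv (deriv (deriv u)) t) + (Real.cos t • deriv (deriv (deriv u)) t + (-Real.sin t) • deriv (deriv u) t)) + ((Real.cos t • deriv (deriv (deriv u)) t + (-Real.sin t) • deriv (deriv u) t) + ((-Real.sin t) • deriv (deriv u) t + (-Real.cos t) • deriv u t))) + Real.cos t • ((Real.sin t • deriv (deriv (deriv u)) t + Real.cos t • deriv (deriv u) t) + (Real.cos t • deriv (deriv u) t + (-Real.sin t) • deriv u t))) + (Real.cos t • ((Real.sin t • deriv (deriv (deriv u)) t + Real.cos t • deriv (deriv u) t) + (Real.cos t • deriv (deriv u) t + (-Real.sin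 t) • deriv u t)) + (-Real.sin t) • (Real.sin t • deriv (deriv u) t + Real.cos t • deriv u t))) t :=
    fun t => ((hsin t).smul (hR t)).add ((hcos t).smul (hP2' t))
  have hG3' : HasDerivAt (fun t => Real.sin t • (Real.sin t • ((Real.sin t • deriv (deriv (deriv u)) t + Real.cos t • deriv (deriv u) t) + (Real.cos t • deriv (deriv u) t + (-Real.sin t) • deriv u t)) + Real.cos t • (Real.sin t • deriv (deriv u) t + Real.cos t • deriv u t)))
      (Real.sin r • ((Real.sin r • (((Real.sin r • deriv (deriv (deriv (deriv u))) r + Real.cos r • deriv (deriv (deriv u)) r) + (Real.cos r • deriv (deriv (deriv u)) r + (-Real.sin r) • deriv (deriv u) r)) + ((Real.cos r • deriv (deriv (deriv u)) r + (-Real.sin r) • deriv (deriv u) r) + ((-Real.sin r) • deriv (deriv u) r + (-Real.cos r) • deriv u r))) + Real.cos r • ((Real.sin r • deriv (deriv (deriv u)) r + Real.cos r • deriv (deriv u) r) + (Real.cos r • deriv (deriv u) r + (-Real.sin r) • deriv u r))) + (Real.cos r • ((Real.sin r • deriv (deriv (deriv u)) r + Real.cos r • deriv (deriv u) r) + (Real.cos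 r • deriv (deriv u) r + (-Real.sin r) • deriv u r)) + (-Real.sin r) • (Real.sin r • deriv (deriv u) r + Real.cos r • deriv u r))) + Real.cos r • (Real.sin r • ((Real.sin r • deriv (deriv (deriv u)) r + Real.cos r • deriv (deriv u) r) + (Real.cos r • deriv (deriv u) r + (-Real.sin r) • deriv u r)) + Real.cos r • (Real.sin r • deriv (deriv u) r + Real.cos r • deriv u r))) r :=
    (hsin r).smul (hP3' r)
  -- assemble
  simp only [Dt, Lap]
  rw [Filter.EventuallyEq.deriv_eq heq, hF2.deriv, (hF1 r hr).deriv, hE2, hE3, hG3'.deriv,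
    (hP2 r).deriv]
  simp only [map_add, map_smul]
  match_scalars
  all_goals field_simp
  all_goals try ring
  · linear_combination (2 : ℝ) * Real.sin_sq_add_cos_sq r
  · linear_combination (-Real.cos r : ℝ) * Real.sin_sq_add_cos_sq r
  · linear_combination (-6 : ℝ) * Real.sin_sq_add_cos_sq r
end
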